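/- arXiv:2106.00902 — 5 statements merged into one kernel-verified Lean document; each statement's English description precedes it below -/
import Mathlib

section
/- Let P be a probability measure, let S_1, …, S_n be real random variables, let 0 < c < 1 and α > 0 be such that P(|S_n − S_k| ≥ α) ≤ c for all 1 ≤ k ≤ n. Suppose moreover that for each k, the event A_k = {max_{l ≤ k−1} |S_l| < 2α, |S_k| ≥ 2α} is independent of the event {|S_n − S_k| ≥ α}. Then (1 − c)·P(max_{1 ≤ k ≤ n} |S_k| ≥ 2α) ≤ P(|S_n| ≥ α). -/
open MeasureTheory ProbabilityTheory

/-- Ottaviani's inequality under a single probability measure P. -/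
theorem stmt_1 {Ω : Type*} [MeasurableSpace Ω] (P : Measure Ω)
    [IsProbabilityMeasure P] (n : ℕ) (hn : 1 ≤ n) (S : ℕ → Ω → ℝ)
    (hmeas : ∀ k, Measurable (S k)) (c : ℝ) (hc0 : 0 < c) (hc1 : c < 1)
    (α : ℝ) (hα : 0 < α)
    (hbound : ∀ k, 1 ≤ k → k ≤ n → (P {ω | α ≤ |S n ω - S k ω|}).toReal ≤ c)
    (hindep : ∀ k, 1 ≤ k → k ≤ n →
      IndepSet {ω | (∀ l, 1 ≤ l → l ≤ k - 1 → |S l ω| < 2 * α) ∧ 2 * α ≤ |S k ω|}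
        {ω | α ≤ |S n ω - S k ω|} P) :
    (1 - c) * (P {ω | ∃ k, 1 ≤ k ∧ k ≤ n ∧ 2 * α ≤ |S k ω|}).toReal ≤
      (P {ω | α ≤ |S n ω|}).toReal := by
  classical
  set A : ℕ → Set Ω := fun k =>
    {ω | (∀ l, 1 ≤ l → l ≤ k - 1 → |S l ω| < 2 * α) ∧ 2 * α ≤ |S k ω|} with hAdef
  set B : ℕ → Set Ω := fun k => {ω | α ≤ |S n ω - S k ω|} with hBdef
  have hA : ∀ k, MeasurableSet (A k) := by
    intro k
    have : A k = (⋂ l, ⋂ (_ : 1 ≤ l), ⋂ (_ : l ≤ k - 1), {ω | |S l ω| < 2 * α}) ∩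
        {ω | 2 * α ≤ |S k ω|} := by
      ext ω; simp [hAdef, Set.mem_iInter]
    rw [this]
    exact (MeasurableSet.iInter fun l => MeasurableSet.iInter fun _ =>
      MeasurableSet.iInter fun _ =>
        measurableSet_lt (hmeas l).abs measurable_const).inter
      (measurableSet_le measurable_const (hmeas k).abs)
  have hB : ∀ k, MeasurableSet (B k) :=
    fun k => measurableSet_le measurable_const ((hmeas n).sub (hmeas k)).abs
  -- disjointness of the A k
  have hdisj : ∀ j ∈ Finset.Icc 1 n, ∀ k ∈ Finset.Icc 1 n, j ≠ k →
      Disjoint (A j) (A k) := by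
    have key : ∀ j k : ℕ, 1 ≤ j → j < k → Disjoint (A j) (A k) := by
      intro j k hj hjk
      rw [Set.disjoint_left]
      rintro ω ⟨_, h2⟩ ⟨h3, _⟩
      exact absurd h2 (not_le.2 (h3 j hj (Nat.le_sub_one_of_lt hjk)))
    intro j hj k hk hne
    rcases lt_or_gt_of_ne hne with h | h
    · exact key j k (Finset.mem_Icc.1 hj).1 h
    · exact (key k j (Finset.mem_Icc.1 hk).1 h).symm
  -- the union of the A k is the maximum event
  have hunion : {ω | ∃ k, 1 ≤ k ∧ k ≤ n ∧ 2 * α ≤ |S k ω|} =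
      ⋃ k ∈ Finset.Icc 1 n, A k := by
    ext ω
    simp only [Set.mem_setOf_eq, Set.mem_iUnion, Finset.mem_Icc, exists_prop]
    constructor
    · rintro h
      have hex : ∃ k, 1 ≤ k ∧ k ≤ n ∧ 2 * α ≤ |S k ω| := h
      let k₀ := Nat.find hex
      obtain ⟨hk1, hk2, hk3⟩ := Nat.find_spec hex
      refine ⟨k₀, ⟨hk1, hk2⟩, ?_, hk3⟩
      intro l hl1 hl2
      by_contra hcon
      push_neg at hcon
      have hlk : l < k₀ := lt_of_le_of_lt hl2 (Nat.sub_lt (lt_of_lt_of_le one_pos hk1) one_pos)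
      exact Nat.find_min hex hlk ⟨hl1, le_trans (le_of_lt hlk) hk2, hcon⟩
    · rintro ⟨k, ⟨hk1, hk2⟩, _, h2⟩
      exact ⟨k, hk1, hk2, h2⟩
  -- each A k ∩ (B k)ᶜ is contained in the target event
  have hsub : ∀ k, A k ∩ (B k)ᶜ ⊆ {ω | α ≤ |S n ω|} := by
    intro k ω ⟨⟨_, h2⟩, h3⟩
    simp only [hBdef, Set.mem_compl_iff, Set.mem_setOf_eq, not_le] at h3
    have : |S k ω| - |S n ω| ≤ |S k ω - S n ω| := abs_sub_abs_le_abs_sub _ _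
    rw [abs_sub_comm] at this
    simp only [Set.mem_setOf_eq]
    linarith
  -- independence computation
  have hkey : ∀ k, 1 ≤ k → k ≤ n →
      (1 - c) * (P (A k)).toReal ≤ (P (A k ∩ (B k)ᶜ)).toReal := by
    intro k hk1 hk2
    have hmul : P (A k ∩ B k) = P (A k) * P (B k) :=
      (hindep k hk1 hk2).measure_inter_eq_mul
    have hsplit : P (A k ∩ B k) + P (A k \ B k) = P (A k) :=
      measure_inter_add_diff (A k) (hB k)
    have hfin1 : P (A k ∩ B k) ≠ ⊤ := measure_ne_top _ _
    have hfin2 : P (A k \ B k) ≠ ⊤ := measure_ne_top _ _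
    have hx : (P (A k ∩ B k)).toReal + (P (A k \ B k)).toReal = (P (A k)).toReal := by
      rw [← ENNReal.toReal_add hfin1 hfin2, hsplit]
    have hz : (P (A k ∩ B k)).toReal = (P (A k)).toReal * (P (B k)).toReal := by
      rw [hmul, ENNReal.toReal_mul]
    have hy : (P (B k)).toReal ≤ c := hbound k hk1 hk2
    have hxnn : (0 : ℝ) ≤ (P (A k)).toReal := ENNReal.toReal_nonneg
    have hAeq : A k ∩ (B k)ᶜ = A k \ B k := rfl
    rw [hAeq]
    nlinarith [hx, hz]
  -- sum up
  have hsum1 : (P {ω | ∃ k, 1 ≤ k ∧ k ≤ n ∧ 2 * α ≤ |S k ω|}).toReal =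
      ∑ k ∈ Finset.Icc 1 n, (P (A k)).toReal := by
    rw [hunion, measure_biUnion_finset hdisj (fun k _ => hA k),
      ENNReal.toReal_sum (fun k _ => measure_ne_top _ _)]
  have hdisj2 : ∀ j ∈ Finset.Icc 1 n, ∀ k ∈ Finset.Icc 1 n, j ≠ k →
      Disjoint (A j ∩ (B j)ᶜ) (A k ∩ (B k)ᶜ) := fun j hj k hk hne =>
    Disjoint.mono Set.inter_subset_left Set.inter_subset_left (hdisj j hj k hk hne)
  have hsum2 : ∑ k ∈ Finset.Icc 1 n, (P (A k ∩ (B k)ᶜ)).toReal ≤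
      (P {ω | α ≤ |S n ω|}).toReal := by
    rw [← ENNReal.toReal_sum (fun k _ => measure_ne_top _ _),
      ← measure_biUnion_finset hdisj2 (fun k _ => (hA k).inter (hB k).compl)]
    refine ENNReal.toReal_mono (measure_ne_top _ _) (measure_mono ?_)
    exact Set.iUnion₂_subset fun k _ => hsub k
  calc (1 - c) * (P {ω | ∃ k, 1 ≤ k ∧ k ≤ n ∧ 2 * α ≤ |S k ω|}).toReal
      = ∑ k ∈ Finset.Icc 1 n, (1 - c) * (P (A k)).toReal := by
        rw [hsum1, Finset.mul_sum]
    _ ≤ ∑ k ∈ Finset.Icc 1 n, (P (A k ∩ (B k)ᶜ)).toReal := by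
        refine Finset.sum_le_sum fun k hk => ?_
        obtain ⟨hk1, hk2⟩ := Finset.mem_Icc.1 hk
        exact hkey k hk1 hk2
    _ ≤ (P {ω | α ≤ |S n ω|}).toReal := hsum2
end

section
/- Let 𝒫 be a nonempty set of probability measures on a measurable space, and define V(A) = sup_{P ∈ 𝒫} P(A). Suppose S_1, …, S_n are random variables with S_k = X_1 + ⋯ + X_k, where for each P ∈ 𝒫 the increments satisfy the kernel independence structure (so that for each P, the event A_k = {max_{l ≤ k−1}|S_l| < 2α, |S_k| ≥ 2α} is P-independent of {|S_n − S_k| ≥ α}). If 0 < c < 1 and max_{1 ≤ k ≤ n} V(|S_n − S_k| ≥ α) ≤ c, then V(max_{1 ≤ k ≤ n} |S_k| ≥ 2α) ≤ (1/(1 − c))·V(|S_n| ≥ α). -/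
open MeasureTheory ProbabilityTheory

lemma ottaviani_aux {Ω : Type*} [MeasurableSpace Ω] (P : Measure Ω)
    [IsProbabilityMeasure P]
    (n : ℕ) (hn : 1 ≤ n) (S : ℕ → Ω → ℝ) (hmeas : ∀ k, Measurable (S k))
    (c : ℝ) (hc1 : c < 1) (α : ℝ)
    (hindep : ∀ k, 1 ≤ k → k ≤ n →
      IndepSet {ω | (∀ l, 1 ≤ l → l ≤ k - 1 → |S l ω| < 2 * α) ∧ 2 * α ≤ |S k ω|}
        {ω | α ≤ |S n ω - S k ω|} P)
    (hbound : ∀ k, 1 ≤ k → k ≤ n → (P {ω | α ≤ |S n ω - S k ω|}).toReal ≤ c) :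
    (1 - c) * (P {ω | ∃ k, 1 ≤ k ∧ k ≤ n ∧ 2 * α ≤ |S k ω|}).toReal ≤
      (P {ω | α ≤ |S n ω|}).toReal := by
  classical
  set A : ℕ → Set Ω :=
    fun k => {ω | (∀ l, 1 ≤ l → l ≤ k - 1 → |S l ω| < 2 * α) ∧ 2 * α ≤ |S k ω|} with hA_def
  set B : ℕ → Set Ω := fun k => {ω | α ≤ |S n ω - S k ω|} with hB_def
  have hAmeas : ∀ k, MeasurableSet (A k) := by
    intro k
    have : A k = (⋂ l ∈ Set.Icc 1 (k - 1), {ω | |S l ω| < 2 * α}) ∩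
        {ω | 2 * α ≤ |S k ω|} := by
      ext ω; simp [hA_def, Set.mem_Icc]
    rw [this]
    exact (MeasurableSet.biInter (Set.to_countable _) fun l _ =>
      measurableSet_lt ((hmeas l).abs) measurable_const).inter
      (measurableSet_le measurable_const ((hmeas k).abs))
  have hBmeas : ∀ k, MeasurableSet (B k) :=
    fun k => measurableSet_le measurable_const (((hmeas n).sub (hmeas k)).abs)
  -- disjointness
  have hkeydisj : ∀ i j, 1 ≤ i → i < j → Disjoint (A i) (A j) := by
    intro i j hi1 hij
    refine Set.disjoint_left.2 fun ω hωi hωj => ?_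
    have := hωj.1 i hi1 (by omega)
    exact absurd hωi.2 (not_le.2 this)
  have hdisj : (↑(Finset.Icc 1 n) : Set ℕ).PairwiseDisjoint A := by
    intro i hi j hj hij
    simp only [Finset.coe_Icc, Set.mem_Icc] at hi hj
    rcases lt_or_gt_of_ne hij with h | h
    · exact hkeydisj i j hi.1 h
    · exact (hkeydisj j i hj.1 h).symm
  -- union
  have hunion : {ω | ∃ k, 1 ≤ k ∧ k ≤ n ∧ 2 * α ≤ |S k ω|} = ⋃ k ∈ Finset.Icc 1 n, A k := by
    ext ω
    simp only [Set.mem_setOf_eq, Set.mem_iUnion, Finset.mem_Icc, exists_prop]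
    constructor
    · rintro h
      have hex : ∃ k, 1 ≤ k ∧ k ≤ n ∧ 2 * α ≤ |S k ω| := h
      let k₀ := Nat.find hex
      have hk₀ := Nat.find_spec hex
      refine ⟨k₀, ⟨hk₀.1, hk₀.2.1⟩, ?_, hk₀.2.2⟩
      intro l hl1 hl2
      by_contra hcon
      push_neg at hcon
      have hlt : l < k₀ := by omega
      exact Nat.find_min hex hlt ⟨hl1, by omega, hcon⟩
    · rintro ⟨k, ⟨hk1, hk2⟩, _, h2⟩
      exact ⟨k, hk1, hk2, h2⟩
  have hfin : ∀ s : Set Ω, P s ≠ ⊤ := fun s => (measure_lt_top P s).ne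
  -- sum decomposition
  have hsum : (P {ω | ∃ k, 1 ≤ k ∧ k ≤ n ∧ 2 * α ≤ |S k ω|}).toReal =
      ∑ k ∈ Finset.Icc 1 n, (P (A k)).toReal := by
    rw [hunion, measure_biUnion_finset hdisj fun k _ => hAmeas k,
      ENNReal.toReal_sum fun k _ => hfin _]
  rw [hsum, Finset.mul_sum]
  -- key: ⋃ (A k ∩ (B k)ᶜ) ⊆ tail event
  have hsubset : (⋃ k ∈ Finset.Icc 1 n, A k ∩ (B k)ᶜ) ⊆ {ω | α ≤ |S n ω|} := by
    intro ω hω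
    simp only [Set.mem_iUnion, Finset.mem_Icc, exists_prop] at hω
    obtain ⟨k, _, hA', hB'⟩ := hω
    simp only [Set.mem_compl_iff, hB_def, Set.mem_setOf_eq, not_le] at hB'
    have h2 : 2 * α ≤ |S k ω| := hA'.2
    have : |S k ω| - |S n ω - S k ω| ≤ |S n ω| := by
      have := abs_sub_abs_le_abs_sub (S k ω) (S n ω)
      have h3 : |S k ω - S n ω| = |S n ω - S k ω| := abs_sub_comm _ _
      linarith
    simp only [Set.mem_setOf_eq]; linarith
  have hdisj2 : (↑(Finset.Icc 1 n) : Set ℕ).PairwiseDisjoint (fun k => A k ∩ (B k)ᶜ) := by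
    intro i hi j hj hij
    exact (hdisj hi hj hij).mono Set.inter_subset_left Set.inter_subset_left
  have hsum2 : ∑ k ∈ Finset.Icc 1 n, (P (A k ∩ (B k)ᶜ)).toReal ≤
      (P {ω | α ≤ |S n ω|}).toReal := by
    rw [← ENNReal.toReal_sum fun k _ => hfin _,
      ← measure_biUnion_finset hdisj2 fun k _ => (hAmeas k).inter (hBmeas k).compl]
    exact ENNReal.toReal_mono (hfin _) (measure_mono hsubset)
  refine le_trans (Finset.sum_le_sum fun k hk => ?_) hsum2
  simp only [Finset.mem_Icc] at hk
  -- per-term: (1-c) * P(A k) ≤ P(A k ∩ Bᶜ k)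
  have hmul : P (A k ∩ B k) = P (A k) * P (B k) :=
    (hindep k hk.1 hk.2).measure_inter_eq_mul
  have hsplit : P (A k ∩ B k) + P (A k ∩ (B k)ᶜ) = P (A k) := by
    rw [← Set.diff_eq]
    exact measure_inter_add_diff (A k) (hBmeas k)
  have hsplitR : (P (A k ∩ B k)).toReal + (P (A k ∩ (B k)ᶜ)).toReal = (P (A k)).toReal := by
    rw [← ENNReal.toReal_add (hfin _) (hfin _), hsplit]
  have hmulR : (P (A k ∩ B k)).toReal = (P (A k)).toReal * (P (B k)).toReal := by
    rw [hmul, ENNReal.toReal_mul]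
  have hBc : (P (B k)).toReal ≤ c := hbound k hk.1 hk.2
  have hPA0 : 0 ≤ (P (A k)).toReal := ENNReal.toReal_nonneg
  nlinarith [hsplitR, hmulR]

/-- Ottaviani's maximal inequality for the upper capacity V(A) = sup_{P ∈ PP} P(A). -/
theorem stmt_2 {Ω : Type*} [MeasurableSpace Ω] (PP : Set (Measure Ω))
    (hPP : PP.Nonempty) (hprob : ∀ P ∈ PP, IsProbabilityMeasure P)
    (n : ℕ) (hn : 1 ≤ n) (S : ℕ → Ω → ℝ) (hmeas : ∀ k, Measurable (S k))
    (c : ℝ) (hc0 : 0 < c) (hc1 : c < 1) (α : ℝ) (hα : 0 < α)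
    (hindep : ∀ P ∈ PP, ∀ k, 1 ≤ k → k ≤ n →
      IndepSet {ω | (∀ l, 1 ≤ l → l ≤ k - 1 → |S l ω| < 2 * α) ∧ 2 * α ≤ |S k ω|}
        {ω | α ≤ |S n ω - S k ω|} P)
    (hbound : ∀ k, 1 ≤ k → k ≤ n →
      (⨆ P ∈ PP, (P {ω | α ≤ |S n ω - S k ω|}).toReal) ≤ c) :
    (⨆ P ∈ PP, (P {ω | ∃ k, 1 ≤ k ∧ k ≤ n ∧ 2 * α ≤ |S k ω|}).toReal) ≤
      (1 / (1 - c)) * ⨆ P ∈ PP, (P {ω | α ≤ |S n ω|}).toReal := by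
  have h1c : 0 < 1 - c := by linarith
  -- boundedness for le_ciSup
  have hbdd : ∀ (f : Measure Ω → Set Ω), BddAbove (Set.range fun P : Measure Ω =>
      ⨆ _ : P ∈ PP, (P (f P)).toReal) := by
    intro f
    refine ⟨1, ?_⟩
    rintro x ⟨P, rfl⟩
    refine Real.iSup_le (fun hP => ?_) zero_le_one
    have := hprob P hP
    exact ENNReal.toReal_le_of_le_ofReal zero_le_one (by simp [prob_le_one])
  have hle_sup : ∀ (f : Measure Ω → Set Ω) (P : Measure Ω), P ∈ PP →
      (P (f P)).toReal ≤ ⨆ Q ∈ PP, (Q (f Q)).toReal := by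
    intro f P hP
    refine le_trans ?_ (le_ciSup (hbdd f) P)
    haveI := hprob P hP
    have hb : BddAbove (Set.range fun _ : P ∈ PP => (P (f P)).toReal) := by
      refine ⟨1, ?_⟩
      rintro x ⟨h, rfl⟩
      exact ENNReal.toReal_le_of_le_ofReal zero_le_one (by simp [prob_le_one])
    exact le_ciSup hb hP
  have hT0 : 0 ≤ ⨆ P ∈ PP, (P {ω | α ≤ |S n ω|}).toReal :=
    Real.iSup_nonneg fun P => Real.iSup_nonneg fun _ => ENNReal.toReal_nonneg
  refine Real.iSup_le (fun P => Real.iSup_le (fun hP => ?_) (mul_nonneg (by positivity) hT0)) (mul_nonneg (by positivity) hT0)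
  haveI := hprob P hP
  have hkey := ottaviani_aux P n hn S hmeas c hc1 α (hindep P hP)
    (fun k hk1 hk2 => le_trans
      (hle_sup (fun _ => {ω | α ≤ |S n ω - S k ω|}) P hP) (hbound k hk1 hk2))
  have htail : (P {ω | α ≤ |S n ω|}).toReal ≤ ⨆ Q ∈ PP, (Q {ω | α ≤ |S n ω|}).toReal :=
    hle_sup (fun _ => {ω | α ≤ |S n ω|}) P hP
  rw [div_mul_eq_mul_div, one_mul, le_div_iff₀ h1c]
  calc (⨆ Q ∈ PP, (Q {ω | α ≤ |S n ω|}).toReal) ≥ (P {ω | α ≤ |S n ω|}).toReal := htail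
    _ ≥ (1 - c) * (P {ω | ∃ k, 1 ≤ k ∧ k ≤ n ∧ 2 * α ≤ |S k ω|}).toReal := hkey
    _ = (P {ω | ∃ k, 1 ≤ k ∧ k ≤ n ∧ 2 * α ≤ |S k ω|}).toReal * (1 - c) := mul_comm _ _
end

section
/- Let 𝒫 be a set of probability measures on ℝ, V(A) = sup_{P ∈ 𝒫} P(A), and suppose lim_{n → ∞} n·V(|X| ≥ n) = 0, where X(x) = x is the identity random variable. Then lim_{n → ∞} (1/n)·sup_{P ∈ 𝒫} E_P[((−n) ∨ X ∧ n)²] = 0. -/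
open MeasureTheory Filter

private lemma clamp_abs (n : ℕ) (x : ℝ) :
    |max (-(n : ℝ)) (min x (n : ℝ))| = min |x| (n : ℝ) := by
  have hn : (0 : ℝ) ≤ n := Nat.cast_nonneg n
  rcases le_total 0 x with hx | hx
  · rw [max_eq_right (le_min (neg_nonpos_of_nonneg hn |>.trans hx)
      (neg_le_self hn)), abs_of_nonneg (le_min hx hn), abs_of_nonneg hx]
  · rw [min_eq_left (hx.trans hn), abs_of_nonpos hx]
    rcases le_total (-(n : ℝ)) x with h | h
    · rw [max_eq_right h, abs_of_nonpos hx, min_eq_left (by linarith)]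
    · rw [max_eq_left h, abs_neg, abs_of_nonneg hn, min_eq_right (by linarith)]

private lemma pointwise_bound (n : ℕ) (x : ℝ) :
    (max (-(n : ℝ)) (min x (n : ℝ))) ^ 2 ≤
      ∑ k ∈ Finset.range n, (2 * (k : ℝ) + 1) *
        Set.indicator {y : ℝ | (k : ℝ) ≤ |y|} (fun _ => (1 : ℝ)) x := by
  rw [← sq_abs, clamp_abs]
  induction n with
  | zero =>
    simp [min_eq_right (abs_nonneg x)]
  | succ n ih =>
    rw [Finset.sum_range_succ]
    rcases le_total |x| (n : ℝ) with h | h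
    · have h1 : (n : ℝ) ≤ (n : ℝ) + 1 := by linarith
      have hmin : min |x| ((n : ℝ) + 1) = min |x| (n : ℝ) := by
        rw [min_eq_left (h.trans h1), min_eq_left h]
      push_cast
      rw [hmin]
      have hind : 0 ≤ (2 * (n : ℝ) + 1) *
          Set.indicator {y : ℝ | (n : ℝ) ≤ |y|} (fun _ => (1 : ℝ)) x := by
        apply mul_nonneg (by positivity)
        exact Set.indicator_nonneg (fun _ _ => zero_le_one) x
      linarith [ih]
    · have hind : Set.indicator {y : ℝ | (n : ℝ) ≤ |y|} (fun _ => (1 : ℝ)) x = 1 :=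
        Set.indicator_of_mem (show x ∈ {y : ℝ | (n : ℝ) ≤ |y|} from h) _
      have hmin : min |x| (n : ℝ) = (n : ℝ) := min_eq_right h
      have hle : min |x| ((n : ℝ) + 1) ≤ (n : ℝ) + 1 := min_le_right _ _
      have hnn : 0 ≤ min |x| ((n : ℝ) + 1) := le_min (abs_nonneg x) (by positivity)
      have hsq : (min |x| ((n : ℝ) + 1)) ^ 2 ≤ ((n : ℝ) + 1) ^ 2 := by
        nlinarith
      have ih' := ih
      rw [hmin] at ih'
      push_cast
      rw [hind]
      nlinarith

private lemma measSet (c : ℝ) : MeasurableSet {y : ℝ | c ≤ |y|} :=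
  (isClosed_le continuous_const continuous_abs).measurableSet

/-- If n·V(|X| ≥ n) → 0 where V(A) = sup_{P ∈ 𝒫} P(A) and X is the identity on ℝ,
    then (1/n)·sup_{P ∈ 𝒫} E_P[((−n) ∨ X ∧ n)²] → 0. -/
theorem stmt_4 (PP : Set (Measure ℝ)) (hne : PP.Nonempty)
    (hprob : ∀ P ∈ PP, IsProbabilityMeasure P)
    (htail : Tendsto (fun n : ℕ => (n : ℝ) * ⨆ P ∈ PP, (P {x : ℝ | (n : ℝ) ≤ |x|}).toReal)
      atTop (nhds 0)) :
    Tendsto (fun n : ℕ =>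
        (1 / (n : ℝ)) * ⨆ P ∈ PP, ∫ x : ℝ, (max (-(n : ℝ)) (min x (n : ℝ))) ^ 2 ∂P)
      atTop (nhds 0) := by
  set V : ℕ → ℝ := fun k => ⨆ P ∈ PP, (P {x : ℝ | (k : ℝ) ≤ |x|}).toReal with hV
  -- V k is nonneg and each P-term is below V k
  have hVnonneg : ∀ k : ℕ, 0 ≤ V k := fun k =>
    Real.iSup_nonneg fun P => Real.iSup_nonneg fun _ => ENNReal.toReal_nonneg
  have hVle : ∀ k : ℕ, ∀ P ∈ PP, (P {x : ℝ | (k : ℝ) ≤ |x|}).toReal ≤ V k := by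
    intro k P hP
    have hb : BddAbove (Set.range fun P =>
        ⨆ _ : P ∈ PP, (P {x : ℝ | (k : ℝ) ≤ |x|}).toReal) := by
      refine ⟨1, ?_⟩
      rintro _ ⟨Q, rfl⟩
      refine Real.iSup_le (fun hQ => ?_) zero_le_one
      have := hprob Q hQ
      exact ENNReal.toReal_le_of_le_ofReal zero_le_one (by simpa using prob_le_one)
    calc (P {x : ℝ | (k : ℝ) ≤ |x|}).toReal
        = ⨆ _ : P ∈ PP, (P {x : ℝ | (k : ℝ) ≤ |x|}).toReal := (ciSup_pos (f := fun _ : P ∈ PP => (P {x : ℝ | (k : ℝ) ≤ |x|}).toReal) hP).symm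
      _ ≤ V k := le_ciSup hb P
  -- V k → 0
  have hVto : Tendsto V atTop (nhds 0) := by
    have hsq : ∀ᶠ k : ℕ in atTop, V k ≤ (k : ℝ) * V k := by
      filter_upwards [eventually_ge_atTop 1] with k hk
      have : (1 : ℝ) ≤ (k : ℝ) := by exact_mod_cast hk
      nlinarith [hVnonneg k]
    exact tendsto_of_tendsto_of_tendsto_of_le_of_le'
      tendsto_const_nhds htail (Eventually.of_forall hVnonneg) hsq
  -- a k := (2k+1) V k → 0
  have hato : Tendsto (fun k : ℕ => (2 * (k : ℝ) + 1) * V k) atTop (nhds 0) := by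
    have : Tendsto (fun k : ℕ => 2 * ((k : ℝ) * V k) + V k) atTop (nhds (2 * 0 + 0)) :=
      ((htail.const_mul 2).add hVto)
    simpa [mul_comm, mul_assoc, mul_left_comm, two_mul, add_mul, mul_add] using this.congr
      (fun k => by ring)
  -- Cesàro
  have hces : Tendsto (fun n : ℕ =>
      ((n : ℝ)⁻¹) * ∑ k ∈ Finset.range n, (2 * (k : ℝ) + 1) * V k) atTop (nhds 0) :=
    hato.cesaro
  -- per-P integral bound
  have key : ∀ n : ℕ, ∀ P ∈ PP,
      ∫ x : ℝ, (max (-(n : ℝ)) (min x (n : ℝ))) ^ 2 ∂P ≤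
        ∑ k ∈ Finset.range n, (2 * (k : ℝ) + 1) * V k := by
    intro n P hP
    have := hprob P hP
    have hcont : Continuous fun x : ℝ => (max (-(n : ℝ)) (min x (n : ℝ))) ^ 2 := by
      fun_prop
    have hint1 : Integrable (fun x : ℝ => (max (-(n : ℝ)) (min x (n : ℝ))) ^ 2) P := by
      refine Integrable.mono' (integrable_const ((n : ℝ) ^ 2))
        hcont.aestronglyMeasurable (Eventually.of_forall fun x => ?_)
      rw [Real.norm_eq_abs, abs_of_nonneg (sq_nonneg _), ← sq_abs, clamp_abs]
      have h1 : min |x| (n : ℝ) ≤ (n : ℝ) := min_le_right _ _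
      have h2 : 0 ≤ min |x| (n : ℝ) := le_min (abs_nonneg x) (Nat.cast_nonneg n)
      nlinarith
    have hint2 : ∀ k : ℕ, Integrable
        (fun x : ℝ => (2 * (k : ℝ) + 1) *
          Set.indicator {y : ℝ | (k : ℝ) ≤ |y|} (fun _ => (1 : ℝ)) x) P := by
      intro k
      exact (((integrable_const (1 : ℝ)).indicator (measSet (k : ℝ)))).const_mul _
    calc ∫ x : ℝ, (max (-(n : ℝ)) (min x (n : ℝ))) ^ 2 ∂P
        ≤ ∫ x : ℝ, ∑ k ∈ Finset.range n, (2 * (k : ℝ) + 1) *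
            Set.indicator {y : ℝ | (k : ℝ) ≤ |y|} (fun _ => (1 : ℝ)) x ∂P := by
          exact integral_mono hint1 (integrable_finset_sum _ fun k _ => hint2 k)
            (fun x => pointwise_bound n x)
      _ = ∑ k ∈ Finset.range n, (2 * (k : ℝ) + 1) *
            (P {y : ℝ | (k : ℝ) ≤ |y|}).toReal := by
          rw [integral_finset_sum _ fun k _ => hint2 k]
          refine Finset.sum_congr rfl fun k _ => ?_
          rw [integral_const_mul]
          congr 1
          exact integral_indicator_one (measSet (k : ℝ))
      _ ≤ ∑ k ∈ Finset.range n, (2 * (k : ℝ) + 1) * V k := by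
          refine Finset.sum_le_sum fun k _ => ?_
          exact mul_le_mul_of_nonneg_left (hVle k P hP) (by positivity)
  -- squeeze
  have hupper : ∀ n : ℕ,
      (1 / (n : ℝ)) * ⨆ P ∈ PP, ∫ x : ℝ, (max (-(n : ℝ)) (min x (n : ℝ))) ^ 2 ∂P ≤
        ((n : ℝ)⁻¹) * ∑ k ∈ Finset.range n, (2 * (k : ℝ) + 1) * V k := by
    intro n
    rw [one_div]
    refine mul_le_mul_of_nonneg_left ?_ (by positivity)
    refine Real.iSup_le (fun P => Real.iSup_le (fun hP => key n P hP) ?_) ?_ <;>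
      exact Finset.sum_nonneg fun k _ => mul_nonneg (by positivity) (hVnonneg k)
  have hlower : ∀ n : ℕ, 0 ≤
      (1 / (n : ℝ)) * ⨆ P ∈ PP, ∫ x : ℝ, (max (-(n : ℝ)) (min x (n : ℝ))) ^ 2 ∂P := by
    intro n
    refine mul_nonneg (by positivity) ?_
    exact Real.iSup_nonneg fun P => Real.iSup_nonneg fun _ =>
      integral_nonneg fun x => sq_nonneg _
  exact tendsto_of_tendsto_of_tendsto_of_le_of_le'
    tendsto_const_nhds hces (Eventually.of_forall hlower) (Eventually.of_forall hupper)
end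

section
/- Let Ω = ℕ, let 𝒫 = {P_n : n ∈ ℕ, n ≥ 1} where P_1({1}) = 1 and, for n ≥ 2, P_n({1}) = 1 − 1/n² and P_n({k·n}) = 1/n³ for k = 1, …, n. Let X(m) = m for m ∈ ℕ. Then lim_{λ → ∞} sup_{P ∈ 𝒫} E_P[(|X| − λ)⁺] = 1/2. -/
open MeasureTheory Filter
open scoped ENNReal

/-- The family P_n: P_1 = δ_1 and, for n ≥ 2,
    P_n = (1 − 1/n²)·δ_1 + Σ_{k=1}^n (1/n³)·δ_{k·n}. -/
noncomputable def Pmeas (n : ℕ) : Measure ℕ :=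
  if n ≤ 1 then Measure.dirac 1
  else (1 - 1 / (n : ℝ≥0∞) ^ 2) • Measure.dirac 1 +
    ∑ k ∈ Finset.Icc 1 n, (1 / (n : ℝ≥0∞) ^ 3) • Measure.dirac (k * n)

lemma integrable_dirac'' (f : ℕ → ℝ) (a : ℕ) : Integrable f (Measure.dirac a) := by
  refine ⟨(measurable_of_countable f).aestronglyMeasurable, ?_⟩
  rw [HasFiniteIntegral, lintegral_dirac]
  exact ENNReal.coe_lt_top

lemma sumIccR (n : ℕ) : ∑ k ∈ Finset.Icc 1 n, (k : ℝ) = n * (n + 1) / 2 := by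
  induction n with
  | zero => simp
  | succ n ih =>
      rw [Finset.sum_Icc_succ_top (by omega), ih]
      push_cast; ring

/-- The explicit value of the integral for `n ≥ 1`, `λ ≥ 1`. -/
lemma integral_Pmeas (n : ℕ) (hn : 1 ≤ n) (lam : ℝ) (hl : 1 ≤ lam) :
    ∫ m : ℕ, max ((m : ℝ) - lam) 0 ∂(Pmeas n)
      = ∑ k ∈ Finset.Icc 1 n, (1 / (n : ℝ) ^ 3) * max ((k : ℝ) * n - lam) 0 := by
  rcases eq_or_lt_of_le hn with h1 | h2
  · -- n = 1
    rw [Pmeas, if_pos (by omega), integral_dirac]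
    rw [← h1]
    simp [max_eq_right (by linarith : (1 : ℝ) - lam ≤ 0)]
  · -- n ≥ 2
    have hne : ¬ n ≤ 1 := by omega
    have hfin : (1 / (n : ℝ≥0∞) ^ 3) ≠ ⊤ := by
      simp [ENNReal.div_eq_top]
      omega
    have hint : ∀ a : ℕ, Integrable (fun m : ℕ => max ((m : ℝ) - lam) 0)
        ((1 / (n : ℝ≥0∞) ^ 3) • Measure.dirac a) :=
      fun a => (integrable_dirac'' _ a).smul_measure hfin
    have hfin2 : (1 - 1 / (n : ℝ≥0∞) ^ 2) ≠ ⊤ :=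
      (lt_of_le_of_lt tsub_le_self ENNReal.one_lt_top).ne
    rw [Pmeas, if_neg hne,
      integral_add_measure ((integrable_dirac'' _ 1).smul_measure hfin2)
        (integrable_finset_sum_measure.2 fun k _ => hint _),
      integral_smul_measure, integral_dirac,
      integral_finset_sum_measure (fun k _ => hint _)]
    have h0 : max ((1 : ℝ) - lam) 0 = 0 := max_eq_right (by linarith)
    rw [show ((1 : ℕ) : ℝ) = 1 by norm_num, h0, smul_zero, zero_add]
    refine Finset.sum_congr rfl fun k hk => ?_
    rw [integral_smul_measure, integral_dirac]
    have : ((1 / (n : ℝ≥0∞) ^ 3)).toReal = 1 / (n : ℝ) ^ 3 := by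
      simp [ENNReal.toReal_div]
    rw [this, smul_eq_mul]
    push_cast
    ring_nf

/-- With X(m) = m, lim_{λ → ∞} sup_{n ≥ 1} E_{P_n}[(|X| − λ)⁺] = 1/2. -/
theorem stmt_8 :
    Tendsto (fun lam : ℝ => ⨆ n : {n : ℕ // 1 ≤ n}, ∫ m : ℕ, max ((m : ℝ) - lam) 0 ∂(Pmeas n))
      atTop (nhds (1 / 2)) := by
  -- abbreviation
  set g : ℕ → ℝ → ℝ := fun n lam => ∑ k ∈ Finset.Icc 1 n, (1 / (n : ℝ) ^ 3) * max ((k : ℝ) * n - lam) 0 with hg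
  -- upper bound
  have hub : ∀ (lam : ℝ), 1 ≤ lam → ∀ n : ℕ, 1 ≤ n → g n lam ≤ 1 / 2 + 1 / (2 * lam) := by
    intro lam hl n hn
    have hn0 : (0 : ℝ) < n := by exact_mod_cast hn
    rcases le_or_gt (n : ℝ) lam with hcase | hcase
    · -- n ≤ λ : bound each term by (1/n³) * n*(k-1)
      have : g n lam ≤ ∑ k ∈ Finset.Icc 1 n, (1 / (n : ℝ) ^ 3) * ((n : ℝ) * ((k : ℝ) - 1)) := by
        refine Finset.sum_le_sum fun k hk => ?_
        have hk1 : 1 ≤ k := (Finset.mem_Icc.1 hk).1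
        have hk1' : (1 : ℝ) ≤ k := by exact_mod_cast hk1
        have : max ((k : ℝ) * n - lam) 0 ≤ (n : ℝ) * ((k : ℝ) - 1) := by
          apply max_le
          · nlinarith
          · nlinarith
        have hpos : (0 : ℝ) ≤ 1 / (n : ℝ) ^ 3 := by positivity
        exact mul_le_mul_of_nonneg_left this hpos
      have hsum : ∑ k ∈ Finset.Icc 1 n, (1 / (n : ℝ) ^ 3) * ((n : ℝ) * ((k : ℝ) - 1))
          = (1 / (n : ℝ) ^ 3) * ((n : ℝ) * ((n : ℝ) * (n + 1) / 2 - n)) := by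
        rw [← Finset.mul_sum, ← Finset.mul_sum, Finset.sum_sub_distrib, sumIccR]
        simp [Nat.card_Icc]
      rw [hsum] at this
      have hhalf : (1 / (n : ℝ) ^ 3) * ((n : ℝ) * ((n : ℝ) * (n + 1) / 2 - n)) ≤ 1 / 2 := by
        rw [div_mul_eq_mul_div, div_le_div_iff₀ (by positivity) (by norm_num)]
        nlinarith
      have : g n lam ≤ 1 / 2 := le_trans this hhalf
      have : (0 : ℝ) < 1 / (2 * lam) := by positivity
      linarith
    · -- λ < n : bound each term by (1/n³) * k*n
      have : g n lam ≤ ∑ k ∈ Finset.Icc 1 n, (1 / (n : ℝ) ^ 3) * ((k : ℝ) * n) := by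
        refine Finset.sum_le_sum fun k hk => ?_
        have hk1 : 1 ≤ k := (Finset.mem_Icc.1 hk).1
        have hk1' : (1 : ℝ) ≤ k := by exact_mod_cast hk1
        have : max ((k : ℝ) * n - lam) 0 ≤ (k : ℝ) * n := by
          apply max_le
          · nlinarith
          · nlinarith
        exact mul_le_mul_of_nonneg_left this (by positivity)
      have hsum : ∑ k ∈ Finset.Icc 1 n, (1 / (n : ℝ) ^ 3) * ((k : ℝ) * n)
          = (1 / (n : ℝ) ^ 3) * ((n : ℝ) * (n + 1) / 2 * n) := by
        rw [← Finset.mul_sum, ← Finset.sum_mul, sumIccR]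
      rw [hsum] at this
      have hbnd : (1 / (n : ℝ) ^ 3) * ((n : ℝ) * (n + 1) / 2 * n) ≤ 1 / 2 + 1 / (2 * lam) := by
        have h1 : (1 / (n : ℝ) ^ 3) * ((n : ℝ) * (n + 1) / 2 * n) = 1 / 2 + 1 / (2 * n) := by
          field_simp
        rw [h1]
        have : 1 / (2 * (n : ℝ)) ≤ 1 / (2 * lam) := by
          apply one_div_le_one_div_of_le (by linarith)
          linarith
        linarith
      linarith
  -- lower bound : for λ ≥ 1, some n with g n lam ≥ 1/2
  have hlb : ∀ (lam : ℝ), 1 ≤ lam → ∃ n : ℕ, 1 ≤ n ∧ 1 / 2 ≤ g n lam := by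
    intro lam hl
    obtain ⟨n, hn2, hnl⟩ : ∃ n : ℕ, 2 ≤ n ∧ 2 * lam ≤ (n : ℝ) := by
      obtain ⟨n, hn⟩ := exists_nat_ge (2 * lam)
      exact ⟨max n 2, le_max_right _ _, le_trans hn (by exact_mod_cast le_max_left n 2)⟩
    refine ⟨n, by omega, ?_⟩
    have hn0 : (0 : ℝ) < n := by positivity
    have hgeq : g n lam = ∑ k ∈ Finset.Icc 1 n, (1 / (n : ℝ) ^ 3) * ((k : ℝ) * n - lam) := by
      refine Finset.sum_congr rfl fun k hk => ?_
      have hk1 : (1 : ℝ) ≤ k := by exact_mod_cast (Finset.mem_Icc.1 hk).1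
      have : (k : ℝ) * n - lam ≥ 0 := by nlinarith
      rw [max_eq_left this]
    rw [hgeq]
    have hsum : ∑ k ∈ Finset.Icc 1 n, (1 / (n : ℝ) ^ 3) * ((k : ℝ) * n - lam)
        = (1 / (n : ℝ) ^ 3) * ((n : ℝ) * (n + 1) / 2 * n - n * lam) := by
      rw [← Finset.mul_sum, Finset.sum_sub_distrib, ← Finset.sum_mul, sumIccR]
      simp [Nat.card_Icc, mul_comm]
    rw [hsum, div_mul_eq_mul_div, le_div_iff₀ (by positivity)]
    nlinarith
  -- connect integral with g and bound the sup
  have key : ∀ lam : ℝ, 1 ≤ lam →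
      1 / 2 ≤ (⨆ n : {n : ℕ // 1 ≤ n}, ∫ m : ℕ, max ((m : ℝ) - lam) 0 ∂(Pmeas n)) ∧
      (⨆ n : {n : ℕ // 1 ≤ n}, ∫ m : ℕ, max ((m : ℝ) - lam) 0 ∂(Pmeas n)) ≤ 1 / 2 + 1 / (2 * lam) := by
    intro lam hl
    have hval : ∀ n : {n : ℕ // 1 ≤ n},
        (∫ m : ℕ, max ((m : ℝ) - lam) 0 ∂(Pmeas n)) = g n lam :=
      fun n => integral_Pmeas n n.2 lam hl
    have hbdd : BddAbove (Set.range fun n : {n : ℕ // 1 ≤ n} =>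
        ∫ m : ℕ, max ((m : ℝ) - lam) 0 ∂(Pmeas n)) := by
      refine ⟨1 / 2 + 1 / (2 * lam), ?_⟩
      rintro x ⟨n, rfl⟩
      exact le_trans (le_of_eq (hval n)) (hub lam hl n n.2)
    constructor
    · obtain ⟨n, hn1, hn2⟩ := hlb lam hl
      calc (1 : ℝ) / 2 ≤ g n lam := hn2
        _ = ∫ m : ℕ, max ((m : ℝ) - lam) 0 ∂(Pmeas (⟨n, hn1⟩ : {n : ℕ // 1 ≤ n})) :=
            (hval ⟨n, hn1⟩).symm
        _ ≤ _ := le_ciSup hbdd ⟨n, hn1⟩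
    · exact ciSup_le fun n => le_trans (le_of_eq (hval n)) (hub lam hl n n.2)
  -- squeeze
  have htend : Tendsto (fun lam : ℝ => 1 / 2 + 1 / (2 * lam)) atTop (nhds (1 / 2)) := by
    have h0 : Tendsto (fun lam : ℝ => 1 / (2 * lam)) atTop (nhds 0) := by
      apply Tendsto.div_atTop (tendsto_const_nhds)
      exact Tendsto.const_mul_atTop (by norm_num) tendsto_id
    have h1 : Tendsto (fun lam : ℝ => 1 / 2 + 1 / (2 * lam)) atTop (nhds (1 / 2 + 0)) :=
      Tendsto.add tendsto_const_nhds h0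
    simpa using h1
  refine tendsto_of_tendsto_of_tendsto_of_le_of_le' tendsto_const_nhds htend ?_ ?_
  · filter_upwards [eventually_ge_atTop (1 : ℝ)] with lam hl
    exact (key lam hl).1
  · filter_upwards [eventually_ge_atTop (1 : ℝ)] with lam hl
    exact (key lam hl).2
end

section
/- Let μ̲ ≤ μ̄ be real numbers, and suppose (c_n), (d_n) are sequences with c_n ≤ d_n such that for every bounded continuous φ : ℝ → ℝ, both lim_n (𝔼_n[φ] − max_{c_n ≤ μ ≤ d_n} φ(μ)) = 0 and lim_n 𝔼_n[φ] = max_{μ̲ ≤ μ ≤ μ̄} φ(μ), where 𝔼_n[φ] denotes some sequence of real numbers. Then c_n → μ̲ and d_n → μ̄. -/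
open Filter

private lemma arctan_csSup_incr (a b : ℝ) (h : a ≤ b) :
    sSup (Real.arctan '' Set.Icc a b) = Real.arctan b := by
  apply IsGreatest.csSup_eq
  refine ⟨⟨b, ⟨h, le_refl b⟩, rfl⟩, ?_⟩
  rintro _ ⟨x, hx, rfl⟩
  exact Real.arctan_strictMono.monotone hx.2

private lemma arctan_csSup_decr (a b : ℝ) (h : a ≤ b) :
    sSup ((fun x => -Real.arctan x) '' Set.Icc a b) = -Real.arctan a := by
  apply IsGreatest.csSup_eq
  refine ⟨⟨a, ⟨le_refl a, h⟩, rfl⟩, ?_⟩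
  rintro _ ⟨x, hx, rfl⟩
  simpa using Real.arctan_strictMono.monotone hx.1

private lemma tendsto_of_arctan (x : ℕ → ℝ) (a : ℝ)
    (h : Tendsto (fun n => Real.arctan (x n)) atTop (nhds (Real.arctan a))) :
    Tendsto x atTop (nhds a) := by
  have hcos : Real.cos (Real.arctan a) ≠ 0 := by
    have := Real.cos_arctan a
    rw [this]
    positivity
  have hc : ContinuousAt Real.tan (Real.arctan a) := Real.continuousAt_tan.mpr hcos
  have := hc.tendsto.comp h
  have hx : (Real.tan ∘ fun n => Real.arctan (x n)) = x := by ext n; simp [Real.tan_arctan]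
  rwa [Real.tan_arctan, hx] at this

/-- Identification step: if 𝔼_n[φ] is asymptotically equal both to
    max_{[c_n, d_n]} φ and to max_{[μ̲, μ̄]} φ for all bounded continuous φ,
    then c_n → μ̲ and d_n → μ̄. -/
theorem stmt_17 (μl μu : ℝ) (hμ : μl ≤ μu) (c d : ℕ → ℝ) (hcd : ∀ n, c n ≤ d n)
    (E : ℕ → (ℝ → ℝ) → ℝ)
    (h1 : ∀ φ : ℝ → ℝ, Continuous φ → (∃ C, ∀ x, |φ x| ≤ C) →
      Tendsto (fun n => E n φ - sSup (φ '' Set.Icc (c n) (d n))) atTop (nhds 0))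
    (h2 : ∀ φ : ℝ → ℝ, Continuous φ → (∃ C, ∀ x, |φ x| ≤ C) →
      Tendsto (fun n => E n φ) atTop (nhds (sSup (φ '' Set.Icc μl μu)))) :
    Tendsto c atTop (nhds μl) ∧ Tendsto d atTop (nhds μu) := by
  have key : ∀ φ : ℝ → ℝ, Continuous φ → (∃ C, ∀ x, |φ x| ≤ C) →
      Tendsto (fun n => sSup (φ '' Set.Icc (c n) (d n))) atTop
        (nhds (sSup (φ '' Set.Icc μl μu))) := by
    intro φ hφ hb
    have := (h2 φ hφ hb).sub (h1 φ hφ hb)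
    simpa using this
  have bdd : ∃ C, ∀ x, |Real.arctan x| ≤ C :=
    ⟨Real.pi / 2, fun x => abs_le.mpr ⟨(Real.neg_pi_div_two_lt_arctan x).le, (Real.arctan_lt_pi_div_two x).le⟩⟩
  have bdd' : ∃ C, ∀ x, |(fun x => -Real.arctan x) x| ≤ C :=
    ⟨Real.pi / 2, fun x => by rw [abs_neg]; exact abs_le.mpr ⟨(Real.neg_pi_div_two_lt_arctan x).le, (Real.arctan_lt_pi_div_two x).le⟩⟩
  constructor
  · have h := key (fun x => -Real.arctan x) (by continuity) bdd'
    rw [arctan_csSup_decr μl μu hμ] at h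
    simp only [arctan_csSup_decr _ _ (hcd _)] at h
    exact tendsto_of_arctan c μl (by simpa using h.neg)
  · have h := key Real.arctan Real.continuous_arctan bdd
    rw [arctan_csSup_incr μl μu hμ] at h
    simp only [arctan_csSup_incr _ _ (hcd _)] at h
    exact tendsto_of_arctan d μu h
end
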